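/- arXiv:2503.21452 — 2 statements merged into one kernel-verified Lean document; each statement's English description precedes it below -/
import Mathlib

section
/- If a vector c = (c₁, …, c_{m−1}) ∈ ℝ^{m−1} satisfies the linear system A(λ) c = d(λ), then the function x(t) := F(t,λ) − Σ_{j=1}^{m−1} b_j(t,λ) c_j is a continuous solution of the loaded Volterra integral equation, and moreover x(t_j) = c_j for j = 1, …, m−1. -/
/-!
Extend `K` off the triangle `t₀ ≤ s ≤ t ≤ T` by composing with a retraction onto it, so that it
becomes continuous and bounded by some `M` on all of `ℝ²`. The iterated kernels then satisfy
`|K_{n+1}(t, s)| ≤ M^{n+1} (t - s)^n / n!`, so the resolvent series can be integrated term by term,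
and swapping the order of integration over the triangle gives
`∫ K_{n+2}(t, s) g(s) ds = ∫ K(t, z) (∫ K_{n+1}(z, s) g(s) ds) dz`. Summing over `n` shows that
`G = g + ∫ R g` is continuous and solves `G = g + λ ∫ K G`. Apply this to `f` and to each `a_j`:
then `x = F - Σ b_j c_j` solves `x = f - Σ a_j c_j + λ ∫ K x`. The system `(I + B) c = d` says
precisely that `x(t_j) = c_j`, so `Σ a_j c_j = Σ a_j x(t_j)`.
-/

open MeasureTheory Matrix Set Function
open scoped Nat

theorem integral_integral_triangle_swap {F : ℝ → ℝ → ℝ} (hF : Continuous (uncurry F))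
    {a b : ℝ} (hab : a ≤ b) :
    ∫ y in a..b, ∫ x in y..b, F x y = ∫ x in a..b, ∫ y in a..x, F x y := by
  set Φ : ℝ → ℝ → ℝ := fun y x => if y ≤ x then F x y else 0
  have hΦ : uncurry Φ = {q : ℝ × ℝ | q.1 ≤ q.2}.indicator fun q => F q.2 q.1 := by
    ext q; simp [Φ, indicator, uncurry]
  have hint :
      Integrable (uncurry Φ) ((volume.restrict (Ioc a b)).prod (volume.restrict (Ioc a b))) := by
    rw [Measure.prod_restrict, ← Measure.volume_eq_prod, hΦ]
    refine IntegrableOn.indicator ?_ (measurableSet_le measurable_fst measurable_snd)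
    exact ((hF.comp continuous_swap).continuousOn.integrableOn_compact
      (isCompact_Icc.prod isCompact_Icc)).mono_set
      (prod_mono Ioc_subset_Icc_self Ioc_subset_Icc_self)
  have hinner_x : ∀ y ∈ Ioc a b, ∫ x in Ioc a b, Φ y x = ∫ x in y..b, F x y := by
    intro y hy
    have : Φ y = (Ici y).indicator fun x => F x y := by ext x; simp [Φ, indicator]
    rw [this, setIntegral_indicator measurableSet_Ici, intervalIntegral.integral_of_le hy.2,
      ← integral_Icc_eq_integral_Ioc]
    congr 2
    ext x
    exact ⟨fun h => ⟨h.2, h.1.2⟩, fun h => ⟨⟨hy.1.trans_le h.1, h.2⟩, h.1⟩⟩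
  have hinner_y : ∀ x ∈ Ioc a b, ∫ y in Ioc a b, Φ y x = ∫ y in a..x, F x y := by
    intro x hx
    have : (Φ · x) = (Iic x).indicator fun y => F x y := by ext y; simp [Φ, indicator]
    rw [this, setIntegral_indicator measurableSet_Iic, intervalIntegral.integral_of_le hx.1.le,
      Ioc_inter_Iic, min_eq_right hx.2]
  calc ∫ y in a..b, ∫ x in y..b, F x y
      = ∫ y in Ioc a b, ∫ x in Ioc a b, Φ y x := by
        rw [intervalIntegral.integral_of_le hab]
        exact setIntegral_congr_fun measurableSet_Ioc fun y hy => (hinner_x y hy).symm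
    _ = ∫ x in Ioc a b, ∫ y in Ioc a b, Φ y x := integral_integral_swap hint
    _ = ∫ x in a..b, ∫ y in a..x, F x y := by
        rw [intervalIntegral.integral_of_le hab]
        exact setIntegral_congr_fun measurableSet_Ioc hinner_y

/-- `iteratedKernel k n` is the iterated kernel `K_{n+1}` of the paper. -/
noncomputable def iteratedKernel (k : ℝ → ℝ → ℝ) : ℕ → ℝ → ℝ → ℝ
  | 0 => k
  | n + 1 => fun t s => ∫ z in s..t, k t z * iteratedKernel k n z s

section IteratedKernel

variable {k : ℝ → ℝ → ℝ}

theorem continuous_iteratedKernel (hk : Continuous (uncurry k)) (n : ℕ) :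
    Continuous (uncurry (iteratedKernel k n)) := by
  induction n with
  | zero => exact hk
  | succ n ih =>
    set h : ℝ × ℝ → ℝ → ℝ := fun q z => k q.1 z * iteratedKernel k n z q.2
    have hh : Continuous (uncurry h) :=
      (hk.comp (continuous_fst.fst.prodMk continuous_snd)).mul
        (ih.comp (continuous_snd.prodMk continuous_fst.snd))
    have hsplit : uncurry (iteratedKernel k (n + 1)) =
        fun q => (∫ z in (0 : ℝ)..q.1, h q z) - ∫ z in (0 : ℝ)..q.2, h q z := by
      ext q
      have hint : ∀ u v : ℝ, IntervalIntegrable (h q) volume u v := fun u v =>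
        (hh.uncurry_left q).intervalIntegrable u v
      exact (intervalIntegral.integral_interval_sub_left (hint 0 q.1) (hint 0 q.2)).symm
    rw [hsplit]
    exact
      (intervalIntegral.continuous_parametric_intervalIntegral_of_continuous hh continuous_fst).sub
        (intervalIntegral.continuous_parametric_intervalIntegral_of_continuous hh continuous_snd)

theorem abs_iteratedKernel_le {M : ℝ} (hM : ∀ t s, |k t s| ≤ M) (n : ℕ) {t s : ℝ} (hst : s ≤ t) :
    |iteratedKernel k n t s| ≤ M ^ (n + 1) * (t - s) ^ n / n ! := by
  induction n generalizing t with
  | zero => simpa [iteratedKernel] using hM t s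
  | succ n ih =>
    have hM0 : 0 ≤ M := (abs_nonneg _).trans (hM 0 0)
    have hpoint : ∀ z ∈ Ioc s t,
        ‖k t z * iteratedKernel k n z s‖ ≤ M ^ (n + 2) / n ! * (z - s) ^ n := by
      intro z hz
      rw [Real.norm_eq_abs, abs_mul]
      calc |k t z| * |iteratedKernel k n z s| ≤ M * (M ^ (n + 1) * (z - s) ^ n / n !) :=
            mul_le_mul (hM t z) (ih hz.1.le) (abs_nonneg _) hM0
        _ = M ^ (n + 2) / n ! * (z - s) ^ n := by ring
    have hbound : ∫ z in s..t, M ^ (n + 2) / n ! * (z - s) ^ n =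
        M ^ (n + 2) * (t - s) ^ (n + 1) / (n + 1) ! := by
      rw [intervalIntegral.integral_const_mul, intervalIntegral.integral_comp_sub_right (· ^ n),
        integral_pow, Nat.factorial_succ]
      push_cast
      field_simp
      ring
    calc |iteratedKernel k (n + 1) t s|
        ≤ ∫ z in s..t, M ^ (n + 2) / n ! * (z - s) ^ n :=
          intervalIntegral.norm_integral_le_of_norm_le hst (ae_of_all _ hpoint)
            ((by fun_prop : Continuous _).intervalIntegrable _ _)
      _ = _ := hbound

end IteratedKernel

noncomputable def iteratedVolterra (k : ℝ → ℝ → ℝ) (t₀ : ℝ) (g : ℝ → ℝ) (n : ℕ) (t : ℝ) : ℝ :=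
  ∫ s in t₀..t, iteratedKernel k n t s * g s

section IteratedVolterra

variable {k : ℝ → ℝ → ℝ} {g : ℝ → ℝ} {t₀ : ℝ}

theorem continuous_iteratedVolterra (hk : Continuous (uncurry k)) (hg : Continuous g) (n : ℕ) :
    Continuous (iteratedVolterra k t₀ g n) :=
  intervalIntegral.continuous_parametric_intervalIntegral_of_continuous
    ((continuous_iteratedKernel hk n).mul (hg.comp continuous_snd)) continuous_id

theorem abs_iteratedVolterra_le {M C : ℝ} (hM : ∀ t s, |k t s| ≤ M) (hC : ∀ s, |g s| ≤ C)
    (n : ℕ) {t : ℝ} (ht : t₀ ≤ t) :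
    |iteratedVolterra k t₀ g n t| ≤ C * M ^ (n + 1) * (t - t₀) ^ (n + 1) / n ! := by
  have hM0 : 0 ≤ M := (abs_nonneg _).trans (hM 0 0)
  have hpoint : ∀ s ∈ uIoc t₀ t,
      ‖iteratedKernel k n t s * g s‖ ≤ M ^ (n + 1) * (t - t₀) ^ n / n ! * C := by
    intro s hs
    rw [uIoc_of_le ht] at hs
    rw [Real.norm_eq_abs, abs_mul]
    refine mul_le_mul ((abs_iteratedKernel_le hM n hs.2).trans ?_) (hC s) (abs_nonneg _)
      (by positivity)
    gcongr
    · linarith [hs.2]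
    · linarith [hs.1]
  calc |iteratedVolterra k t₀ g n t|
      ≤ M ^ (n + 1) * (t - t₀) ^ n / n ! * C * |t - t₀| :=
        intervalIntegral.norm_integral_le_of_norm_le_const hpoint
    _ = C * M ^ (n + 1) * (t - t₀) ^ (n + 1) / n ! := by
        rw [abs_of_nonneg (sub_nonneg.2 ht)]; ring

theorem iteratedVolterra_succ (hk : Continuous (uncurry k)) (hg : Continuous g) (n : ℕ)
    {t : ℝ} (ht : t₀ ≤ t) :
    iteratedVolterra k t₀ g (n + 1) t = ∫ z in t₀..t, k t z * iteratedVolterra k t₀ g n z := by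
  have hF : Continuous (uncurry fun z s => k t z * iteratedKernel k n z s * g s) :=
    ((hk.comp (continuous_const.prodMk continuous_fst)).mul (continuous_iteratedKernel hk n)).mul
      (hg.comp continuous_snd)
  calc iteratedVolterra k t₀ g (n + 1) t
      = ∫ s in t₀..t, ∫ z in s..t, k t z * iteratedKernel k n z s * g s := by
        simp only [iteratedVolterra, iteratedKernel, intervalIntegral.integral_mul_const]
    _ = ∫ z in t₀..t, ∫ s in t₀..z, k t z * iteratedKernel k n z s * g s :=
        integral_integral_triangle_swap hF ht
    _ = ∫ z in t₀..t, k t z * iteratedVolterra k t₀ g n z := by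
        simp only [iteratedVolterra, mul_assoc, intervalIntegral.integral_const_mul]

end IteratedVolterra

theorem hasSum_intervalIntegral_of_abs_le {F : ℕ → ℝ → ℝ} (hF : ∀ n, Continuous (F n))
    {u : ℕ → ℝ} (hu : Summable u) {a b : ℝ} (hab : a ≤ b)
    (hFu : ∀ n, ∀ s ∈ Icc a b, |F n s| ≤ u n) :
    HasSum (fun n => ∫ s in a..b, F n s) (∫ s in a..b, ∑' n, F n s) := by
  have hbound : ∀ n, ∀ s ∈ uIoc a b, ‖F n s‖ ≤ u n := fun n s hs =>
    hFu n s (Ioc_subset_Icc_self (uIoc_of_le hab ▸ hs))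
  refine intervalIntegral.hasSum_integral_of_dominated_convergence (fun n _ => u n)
    (fun n => (hF n).aestronglyMeasurable) (fun n => ae_of_all _ (hbound n))
    (ae_of_all _ fun _ _ => hu) intervalIntegrable_const (ae_of_all _ fun s hs => ?_)
  exact (hu.of_norm_bounded fun n => hbound n s hs).hasSum

theorem summable_mul_pow_succ_div_factorial (C x : ℝ) :
    Summable fun n : ℕ => C * x ^ (n + 1) / n ! := by
  refine ((Real.summable_pow_div_factorial x).mul_left (C * x)).congr fun n => ?_
  ring

noncomputable def resolventSeries (k : ℝ → ℝ → ℝ) (t₀ : ℝ) (g : ℝ → ℝ) (lam t : ℝ) : ℝ :=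
  ∑' n : ℕ, lam ^ (n + 1) * iteratedVolterra k t₀ g n t

section ResolventSeries

variable {k : ℝ → ℝ → ℝ} {g : ℝ → ℝ} {t₀ M C : ℝ} (lam : ℝ)
  (hk : Continuous (uncurry k)) (hM : ∀ t s, |k t s| ≤ M)
  (hg : Continuous g) (hC : ∀ s, |g s| ≤ C)
include hM hC

theorem abs_resolventSeries_term_le (n : ℕ) {T t : ℝ} (ht : t ∈ Icc t₀ T) :
    |lam ^ (n + 1) * iteratedVolterra k t₀ g n t| ≤
      C * (|lam| * M * (T - t₀)) ^ (n + 1) / n ! := by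
  have hM0 : 0 ≤ M := (abs_nonneg _).trans (hM 0 0)
  have hC0 : 0 ≤ C := (abs_nonneg _).trans (hC 0)
  rw [abs_mul, abs_pow]
  calc |lam| ^ (n + 1) * |iteratedVolterra k t₀ g n t|
      ≤ |lam| ^ (n + 1) * (C * M ^ (n + 1) * (t - t₀) ^ (n + 1) / n !) := by
        gcongr; exact abs_iteratedVolterra_le hM hC n ht.1
    _ ≤ |lam| ^ (n + 1) * (C * M ^ (n + 1) * (T - t₀) ^ (n + 1) / n !) := by
        gcongr; · linarith [ht.1]
        · linarith [ht.2]
    _ = C * (|lam| * M * (T - t₀)) ^ (n + 1) / n ! := by rw [mul_pow, mul_pow]; ring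

include hk hg

theorem continuousOn_resolventSeries (T : ℝ) :
    ContinuousOn (resolventSeries k t₀ g lam) (Icc t₀ T) :=
  continuousOn_tsum
    (fun n => (continuous_const.mul (continuous_iteratedVolterra hk hg n)).continuousOn)
    (summable_mul_pow_succ_div_factorial C (|lam| * M * (T - t₀)))
    fun n _ ht => abs_resolventSeries_term_le lam hM hC n ht

theorem integral_resolventKernel_mul {t : ℝ} (ht : t₀ ≤ t) :
    ∫ s in t₀..t, (∑' n : ℕ, lam ^ (n + 1) * iteratedKernel k n t s) * g s =
      resolventSeries k t₀ g lam t := by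
  have hM0 : 0 ≤ M := (abs_nonneg _).trans (hM 0 0)
  have hC0 : 0 ≤ C := (abs_nonneg _).trans (hC 0)
  have hterm : ∀ n, ∀ s ∈ Icc t₀ t, |lam ^ (n + 1) * (iteratedKernel k n t s * g s)| ≤
      C * |lam| * M * ((|lam| * M * (t - t₀)) ^ n / n !) := by
    intro n s hs
    rw [abs_mul, abs_mul, abs_pow]
    calc |lam| ^ (n + 1) * (|iteratedKernel k n t s| * |g s|)
        ≤ |lam| ^ (n + 1) * (M ^ (n + 1) * (t - s) ^ n / n ! * C) := by
          refine mul_le_mul_of_nonneg_left ?_ (by positivity)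
          exact mul_le_mul (abs_iteratedKernel_le hM n hs.2) (hC s) (abs_nonneg _)
            ((abs_nonneg _).trans (abs_iteratedKernel_le hM n hs.2))
      _ ≤ |lam| ^ (n + 1) * (M ^ (n + 1) * (t - t₀) ^ n / n ! * C) := by
          gcongr; · linarith [hs.2]
          · linarith [hs.1]
      _ = C * |lam| * M * ((|lam| * M * (t - t₀)) ^ n / n !) := by rw [mul_pow, mul_pow]; ring
  have hsum := hasSum_intervalIntegral_of_abs_le
    (F := fun n s => lam ^ (n + 1) * (iteratedKernel k n t s * g s))
    (fun n => continuous_const.mul (((continuous_iteratedKernel hk n).uncurry_left t).mul hg))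
    ((Real.summable_pow_div_factorial (|lam| * M * (t - t₀))).mul_left _) ht hterm
  simp only [intervalIntegral.integral_const_mul] at hsum
  calc ∫ s in t₀..t, (∑' n : ℕ, lam ^ (n + 1) * iteratedKernel k n t s) * g s
      = ∫ s in t₀..t, ∑' n : ℕ, lam ^ (n + 1) * (iteratedKernel k n t s * g s) := by
        congr 1; ext s; rw [← tsum_mul_right]; simp only [mul_assoc]
    _ = resolventSeries k t₀ g lam t := hsum.tsum_eq.symm

theorem hasSum_integral_mul_resolventSeries {t : ℝ} (ht : t₀ ≤ t) :
    HasSum (fun n => lam ^ (n + 1) * iteratedVolterra k t₀ g (n + 1) t)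
      (∫ s in t₀..t, k t s * resolventSeries k t₀ g lam s) := by
  have hM0 : 0 ≤ M := (abs_nonneg _).trans (hM 0 0)
  have hterm : ∀ n, ∀ s ∈ Icc t₀ t, |lam ^ (n + 1) * (k t s * iteratedVolterra k t₀ g n s)| ≤
      M * (C * (|lam| * M * (t - t₀)) ^ (n + 1) / n !) := by
    intro n s hs
    rw [mul_left_comm, abs_mul]
    exact mul_le_mul (hM t s) (abs_resolventSeries_term_le lam hM hC n hs) (abs_nonneg _) hM0
  have hint : ∫ s in t₀..t, k t s * resolventSeries k t₀ g lam s =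
      ∫ s in t₀..t, ∑' n : ℕ, lam ^ (n + 1) * (k t s * iteratedVolterra k t₀ g n s) := by
    congr 1; ext s; rw [resolventSeries, ← tsum_mul_left]; simp only [mul_left_comm]
  rw [hint]
  convert hasSum_intervalIntegral_of_abs_le
    (F := fun n s => lam ^ (n + 1) * (k t s * iteratedVolterra k t₀ g n s))
    (fun n => continuous_const.mul ((hk.uncurry_left t).mul (continuous_iteratedVolterra hk hg n)))
    ((summable_mul_pow_succ_div_factorial C _).mul_left M) ht hterm using 1
  ext n
  rw [intervalIntegral.integral_const_mul, iteratedVolterra_succ hk hg n ht]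

theorem resolventSeries_eq_mul_integral {t : ℝ} (ht : t₀ ≤ t) :
    resolventSeries k t₀ g lam t =
      lam * ∫ s in t₀..t, k t s * (g s + resolventSeries k t₀ g lam s) := by
  have hkt : Continuous (k t) := hk.uncurry_left t
  have hS : ContinuousOn (resolventSeries k t₀ g lam) (uIcc t₀ t) := by
    rw [uIcc_of_le ht]; exact continuousOn_resolventSeries lam hk hM hg hC t
  have hsplit : ∫ s in t₀..t, k t s * (g s + resolventSeries k t₀ g lam s) =
      iteratedVolterra k t₀ g 0 t + ∫ s in t₀..t, k t s * resolventSeries k t₀ g lam s := by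
    rw [iteratedVolterra, ← intervalIntegral.integral_add]
    · simp only [mul_add, iteratedKernel]
    · exact (hkt.mul hg).intervalIntegrable _ _
    · exact (hkt.continuousOn.mul hS).intervalIntegrable
  have hsumm : Summable fun n => lam ^ (n + 1) * iteratedVolterra k t₀ g n t :=
    (summable_mul_pow_succ_div_factorial C (|lam| * M * (t - t₀))).of_norm_bounded
      fun n => abs_resolventSeries_term_le lam hM hC n ⟨ht, le_rfl⟩
  rw [hsplit, ← (hasSum_integral_mul_resolventSeries lam hk hM hg hC ht).tsum_eq, resolventSeries,
    hsumm.tsum_eq_zero_add, mul_add, ← tsum_mul_left]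
  congr 1
  · ring
  · exact tsum_congr fun n => by ring

end ResolventSeries

theorem exists_bounded_continuous_extension_of_retraction {X : Type*} [TopologicalSpace X]
    {S : Set X} (hS : IsCompact S) {r : X → X} (hr : Continuous r) (hrS : ∀ x, r x ∈ S)
    (hr_id : ∀ x ∈ S, r x = x) {f : X → ℝ} (hf : ContinuousOn f S) :
    ∃ f' : X → ℝ, Continuous f' ∧ (∃ C, ∀ x, |f' x| ≤ C) ∧ EqOn f' f S := by
  obtain ⟨C, hC⟩ := hS.exists_bound_of_continuousOn hf
  exact ⟨f ∘ r, hf.comp_continuous hr hrS, ⟨C, fun x => hC (r x) (hrS x)⟩,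
    fun x hx => congrArg f (hr_id x hx)⟩

def volterraTriangle (t₀ T : ℝ) : Set (ℝ × ℝ) := {q | t₀ ≤ q.2 ∧ q.2 ≤ q.1 ∧ q.1 ≤ T}

def triangleRetraction (t₀ T : ℝ) (q : ℝ × ℝ) : ℝ × ℝ :=
  (max t₀ (min q.1 T), max t₀ (min q.2 (max t₀ (min q.1 T))))

section VolterraTriangle

variable {t₀ T : ℝ}

theorem isCompact_volterraTriangle : IsCompact (volterraTriangle t₀ T) := by
  refine ((isCompact_Icc (a := t₀) (b := T)).prod (isCompact_Icc (a := t₀) (b := T)))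
    |>.of_isClosed_subset ?_ ?_
  · exact (isClosed_le continuous_const continuous_snd).inter
      ((isClosed_le continuous_snd continuous_fst).inter
        (isClosed_le continuous_fst continuous_const))
  · rintro q ⟨h₁, h₂, h₃⟩
    exact ⟨⟨h₁.trans h₂, h₃⟩, h₁, h₂.trans h₃⟩

theorem continuous_triangleRetraction : Continuous (triangleRetraction t₀ T) := by
  unfold triangleRetraction; fun_prop

theorem triangleRetraction_mem (hT : t₀ ≤ T) (q : ℝ × ℝ) :
    triangleRetraction t₀ T q ∈ volterraTriangle t₀ T :=
  ⟨le_max_left _ _, max_le (le_max_left _ _) (min_le_right _ _), max_le hT (min_le_right _ _)⟩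

theorem triangleRetraction_of_mem {q : ℝ × ℝ} (hq : q ∈ volterraTriangle t₀ T) :
    triangleRetraction t₀ T q = q := by
  obtain ⟨h₁, h₂, h₃⟩ := hq
  simp [triangleRetraction, h₁, h₂, h₃, h₁.trans h₂]

end VolterraTriangle

theorem eq_iteratedKernel_of_eqOn_volterraTriangle {t₀ T : ℝ} {K k : ℝ → ℝ → ℝ}
    (hkK : EqOn (uncurry k) (uncurry K) (volterraTriangle t₀ T)) {Kn : ℕ → ℝ → ℝ → ℝ}
    (hKn1 : ∀ t s, Kn 1 t s = K t s)
    (hKnrec : ∀ n, 2 ≤ n → ∀ t s, Kn n t s = ∫ z in s..t, K t z * Kn (n - 1) z s)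
    (n : ℕ) {t s : ℝ} (hts : (t, s) ∈ volterraTriangle t₀ T) :
    Kn (n + 1) t s = iteratedKernel k n t s := by
  induction n generalizing t with
  | zero => exact (hKn1 t s).trans (hkK hts).symm
  | succ n ih =>
    obtain ⟨h₁, h₂, h₃⟩ := hts
    rw [hKnrec (n + 2) (by omega), iteratedKernel]
    refine intervalIntegral.integral_congr fun z hz => ?_
    rw [uIcc_of_le h₂] at hz
    have hkz : k t z = K t z :=
      hkK (show (t, z) ∈ volterraTriangle t₀ T from ⟨h₁.trans hz.1, hz.2, h₃⟩)
    rw [hkz, ← ih (t := z) ⟨h₁, hz.1, hz.2.trans h₃⟩]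
    rfl

theorem resolvent_solves_volterra {t₀ T : ℝ} (hT : t₀ ≤ T) {K : ℝ → ℝ → ℝ}
    (hK : ContinuousOn (uncurry K) (volterraTriangle t₀ T)) {Kn : ℕ → ℝ → ℝ → ℝ}
    (hKn1 : ∀ t s, Kn 1 t s = K t s)
    (hKnrec : ∀ n, 2 ≤ n → ∀ t s, Kn n t s = ∫ z in s..t, K t z * Kn (n - 1) z s)
    {lam : ℝ} {R : ℝ → ℝ → ℝ} (hR : ∀ t s, R t s = ∑' n : ℕ, lam ^ (n + 1) * Kn (n + 1) t s)
    {g : ℝ → ℝ} (hg : ContinuousOn g (Icc t₀ T))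
    {G : ℝ → ℝ} (hG : ∀ t, G t = g t + ∫ s in t₀..t, R t s * g s) :
    ContinuousOn G (Icc t₀ T) ∧ ∀ t ∈ Icc t₀ T, G t = g t + lam * ∫ s in t₀..t, K t s * G s := by
  obtain ⟨k, hk, ⟨M, hM⟩, hkK⟩ := exists_bounded_continuous_extension_of_retraction
    isCompact_volterraTriangle continuous_triangleRetraction (triangleRetraction_mem hT)
    (fun _ => triangleRetraction_of_mem) hK
  rw [← uncurry_curry k] at hk hkK
  obtain ⟨g', hg', ⟨C, hC⟩, hgg⟩ := exists_bounded_continuous_extension_of_retraction isCompact_Icc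
    (continuous_subtype_val.comp continuous_projIcc) (fun s => (projIcc t₀ T hT s).2)
    (fun _ hs => congrArg Subtype.val (projIcc_of_mem hT hs)) hg
  have hGS : ∀ t ∈ Icc t₀ T, G t = g t + resolventSeries (curry k) t₀ g' lam t := by
    intro t ht
    rw [hG, ← integral_resolventKernel_mul lam hk (fun t s => hM (t, s)) hg' hC ht.1]
    congr 1
    refine intervalIntegral.integral_congr fun s hs => ?_
    rw [uIcc_of_le ht.1] at hs
    simp only [hR, hgg ⟨hs.1, hs.2.trans ht.2⟩,
      eq_iteratedKernel_of_eqOn_volterraTriangle hkK hKn1 hKnrec _ ⟨hs.1, hs.2, ht.2⟩]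
  refine ⟨(hg.add (continuousOn_resolventSeries lam hk (fun t s => hM (t, s)) hg' hC T)).congr hGS,
    fun t ht => ?_⟩
  rw [hGS t ht, resolventSeries_eq_mul_integral lam hk (fun t s => hM (t, s)) hg' hC ht.1]
  congr 2
  refine intervalIntegral.integral_congr fun s hs => ?_
  rw [uIcc_of_le ht.1] at hs
  have hs' : s ∈ Icc t₀ T := ⟨hs.1, hs.2.trans ht.2⟩
  have hkK_ts : curry k t s = K t s := hkK (show (t, s) ∈ _ from ⟨hs.1, hs.2, ht.2⟩)
  rw [hGS s hs', hgg hs', hkK_ts]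

theorem continuousOn_Icc_of_volterraTriangle {t₀ T t : ℝ} {K : ℝ → ℝ → ℝ}
    (hK : ContinuousOn (uncurry K) (volterraTriangle t₀ T)) (ht : t ≤ T) :
    ContinuousOn (K t) (Icc t₀ t) :=
  hK.comp (continuous_const.prodMk continuous_id).continuousOn fun _ hs => ⟨hs.1, hs.2, ht⟩

theorem intervalIntegral_mul_sub_sum_mul {ι : Type*} [Fintype ι] {a b : ℝ} {κ u : ℝ → ℝ}
    {v : ι → ℝ → ℝ} (hκ : ContinuousOn κ (uIcc a b)) (hu : ContinuousOn u (uIcc a b))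
    (hv : ∀ j, ContinuousOn (v j) (uIcc a b)) (c : ι → ℝ) :
    ∫ s in a..b, κ s * (u s - ∑ j, v j s * c j) =
      (∫ s in a..b, κ s * u s) - ∑ j, (∫ s in a..b, κ s * v j s) * c j := by
  have hint : ∀ j, ContinuousOn (fun s => κ s * v j s * c j) (uIcc a b) := fun j =>
    (hκ.mul (hv j)).mul continuousOn_const
  simp only [mul_sub, Finset.mul_sum, ← mul_assoc]
  rw [intervalIntegral.integral_sub (f := fun s => κ s * u s)
      (g := fun s => ∑ j, κ s * v j s * c j) (hκ.mul hu).intervalIntegrable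
      (continuousOn_finsetSum _ fun j _ => hint j).intervalIntegrable,
    intervalIntegral.integral_finsetSum fun j _ => (hint j).intervalIntegrable]
  simp only [intervalIntegral.integral_mul_const]

theorem sub_sum_mul_eq_of_mulVec_eq {n R : Type*} [Fintype n] [DecidableEq n] [Ring R]
    {A : Matrix n n R} {B : n → n → R} (hA : ∀ i j, A i j = (if i = j then 1 else 0) + B i j)
    {c d : n → R} (hc : A *ᵥ c = d) (i : n) :
    d i - ∑ j, B i j * c j = c i := by
  have hA' : A = 1 + Matrix.of B := by
    ext i j; rw [hA, Matrix.add_apply, one_apply, of_apply]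
  rw [← hc, hA', add_mulVec, one_mulVec]
  simp [mulVec, dotProduct]

theorem slae_solution_gives_lvie_solution_general
    (t₀ T : ℝ) (ht : t₀ < T) (m : ℕ)
    (p : Fin (m - 1) → ℝ)
    (f : ℝ → ℝ) (hf : ContinuousOn f (Set.Icc t₀ T))
    (a : Fin (m - 1) → ℝ → ℝ) (ha : ∀ j, ContinuousOn (a j) (Set.Icc t₀ T))
    (K : ℝ → ℝ → ℝ)
    (hK : ContinuousOn (fun q : ℝ × ℝ => K q.1 q.2)
      {q : ℝ × ℝ | t₀ ≤ q.2 ∧ q.2 ≤ q.1 ∧ q.1 ≤ T})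
    (lam : ℝ)
    (Kn : ℕ → ℝ → ℝ → ℝ)
    (hKn1 : ∀ t s, Kn 1 t s = K t s)
    (hKnrec : ∀ n, 2 ≤ n → ∀ t s, Kn n t s = ∫ z in s..t, K t z * Kn (n - 1) z s)
    (R : ℝ → ℝ → ℝ → ℝ)
    (hR : ∀ t s lam', R t s lam' = ∑' n : ℕ, lam' ^ (n + 1) * Kn (n + 1) t s)
    (F : ℝ → ℝ → ℝ)
    (hF : ∀ t lam', F t lam' = f t + ∫ s in t₀..t, R t s lam' * f s)
    (b : Fin (m - 1) → ℝ → ℝ → ℝ)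
    (hb : ∀ j t lam', b j t lam' = a j t + ∫ s in t₀..t, R t s lam' * a j s)
    (A : Matrix (Fin (m - 1)) (Fin (m - 1)) ℝ)
    (hA : ∀ i j, A i j = (if i = j then 1 else 0) + b j (p i) lam)
    (d : Fin (m - 1) → ℝ)
    (hd : ∀ i, d i = F (p i) lam)
    (c : Fin (m - 1) → ℝ) (hc : A *ᵥ c = d) :
    ContinuousOn (fun t => F t lam - ∑ j, b j t lam * c j) (Set.Icc t₀ T) ∧
    (∀ t ∈ Set.Icc t₀ T,
      (F t lam - ∑ j, b j t lam * c j)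
          + ∑ j, a j t * (F (p j) lam - ∑ i, b i (p j) lam * c i) =
        lam * (∫ s in t₀..t, K t s * (F s lam - ∑ j, b j s lam * c j)) + f t) ∧
    (∀ j, F (p j) lam - ∑ i, b i (p j) lam * c i = c j) := by
  obtain ⟨hFc, hFeq⟩ := resolvent_solves_volterra ht.le hK hKn1 hKnrec (fun t s => hR t s lam) hf
    (G := (F · lam)) fun t => hF t lam
  choose hbc hbeq using fun j => resolvent_solves_volterra ht.le hK hKn1 hKnrec
    (fun t s => hR t s lam) (ha j) (G := (b j · lam)) fun t => hb j t lam
  have hnodes : ∀ i, F (p i) lam - ∑ j, b j (p i) lam * c j = c i := fun i => by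
    rw [← hd]; exact sub_sum_mul_eq_of_mulVec_eq (B := fun i j => b j (p i) lam) hA hc i
  refine ⟨hFc.sub (continuousOn_finsetSum _ fun j _ => (hbc j).mul continuousOn_const),
    fun t ht => ?_, hnodes⟩
  have hsub : uIcc t₀ t ⊆ Icc t₀ T := uIcc_of_le ht.1 ▸ Icc_subset_Icc_right ht.2
  rw [intervalIntegral_mul_sub_sum_mul
      (uIcc_of_le ht.1 ▸ continuousOn_Icc_of_volterraTriangle hK ht.2) (hFc.mono hsub)
      (fun j => (hbc j).mono hsub), hFeq t ht]
  simp only [hnodes, fun j => hbeq j t ht, add_mul, Finset.sum_add_distrib, mul_sub,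
    Finset.mul_sum, mul_assoc]
  ring

/-- If c solves the linear system A(λ) c = d(λ), then
x(t) := F(t,λ) − Σⱼ bⱼ(t,λ) cⱼ is a continuous solution of the LVIE with x(tⱼ) = cⱼ. -/
theorem slae_solution_gives_lvie_solution
    (t₀ T : ℝ) (ht : t₀ < T) (m : ℕ) (hm : 2 ≤ m)
    (p : Fin (m - 1) → ℝ) (hpmono : StrictMono p)
    (hp : ∀ j, t₀ < p j ∧ p j < T)
    (f : ℝ → ℝ) (hf : ContinuousOn f (Set.Icc t₀ T))
    (a : Fin (m - 1) → ℝ → ℝ) (ha : ∀ j, ContinuousOn (a j) (Set.Icc t₀ T))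
    (K : ℝ → ℝ → ℝ)
    (hK : ContinuousOn (fun q : ℝ × ℝ => K q.1 q.2)
      {q : ℝ × ℝ | t₀ ≤ q.2 ∧ q.2 ≤ q.1 ∧ q.1 ≤ T})
    (lam : ℝ)
    (Kn : ℕ → ℝ → ℝ → ℝ)
    (hKn1 : ∀ t s, Kn 1 t s = K t s)
    (hKnrec : ∀ n, 2 ≤ n → ∀ t s, Kn n t s = ∫ z in s..t, K t z * Kn (n - 1) z s)
    (R : ℝ → ℝ → ℝ → ℝ)
    (hR : ∀ t s lam', R t s lam' = ∑' n : ℕ, lam' ^ (n + 1) * Kn (n + 1) t s)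
    (F : ℝ → ℝ → ℝ)
    (hF : ∀ t lam', F t lam' = f t + ∫ s in t₀..t, R t s lam' * f s)
    (b : Fin (m - 1) → ℝ → ℝ → ℝ)
    (hb : ∀ j t lam', b j t lam' = a j t + ∫ s in t₀..t, R t s lam' * a j s)
    (A : Matrix (Fin (m - 1)) (Fin (m - 1)) ℝ)
    (hA : ∀ i j, A i j = (if i = j then 1 else 0) + b j (p i) lam)
    (d : Fin (m - 1) → ℝ)
    (hd : ∀ i, d i = F (p i) lam)
    (c : Fin (m - 1) → ℝ) (hc : A *ᵥ c = d) :
    ContinuousOn (fun t => F t lam - ∑ j, b j t lam * c j) (Set.Icc t₀ T) ∧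
    (∀ t ∈ Set.Icc t₀ T,
      (F t lam - ∑ j, b j t lam * c j)
          + ∑ j, a j t * (F (p j) lam - ∑ i, b i (p j) lam * c i) =
        lam * (∫ s in t₀..t, K t s * (F s lam - ∑ j, b j s lam * c j)) + f t) ∧
    (∀ j, F (p j) lam - ∑ i, b i (p j) lam * c i = c j) :=
  slae_solution_gives_lvie_solution_general t₀ T ht m p f hf a ha K hK lam Kn hKn1 hKnrec R hR F hF
    b hb A hA d hd c hc
end

section
/- The resolvent R(t,s,λ) is jointly continuous as a function of (t,s,λ) on Δ × ℝ; in particular, for each fixed (t,s) ∈ Δ the map λ ↦ R(t,s,λ) is continuous, uniformly in (t,s) on Δ for λ ranging in compact sets. -/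
/-!
Extend `K` (Tietze) to a continuous kernel `G` on the whole plane; on `Δ` the iterated kernels
of `K` and of `G` agree. If `|G| ≤ M` on `Δ`, induction gives
`|K_{n+1}(t,s)| ≤ M^{n+1} (t-s)^n / n!`, so for `|λ| ≤ A` the series for `R` is dominated by the
convergent exponential series `∑ A^{n+1} M^{n+1} (T-t₀)^n / n!`. Uniform convergence of continuous
terms gives joint continuity, and Heine–Cantor on the compact set `Δ × C` gives the uniformity
in `(t,s)`.
-/

open MeasureTheory Set

theorem intervalIntegral.continuous_parametric_intervalIntegral_of_continuous₂
    {X : Type*} [TopologicalSpace X] {f : X → ℝ → ℝ} (hf : Continuous f.uncurry)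
    {a b : X → ℝ} (ha : Continuous a) (hb : Continuous b) :
    Continuous fun x => ∫ t in a x..b x, f x t := by
  have hsplit : (fun x => ∫ t in a x..b x, f x t) =
      fun x => (∫ t in (0 : ℝ)..b x, f x t) - ∫ t in (0 : ℝ)..a x, f x t := by
    funext x
    have hfx : Continuous (f x) := hf.uncurry_left x
    exact (intervalIntegral.integral_interval_sub_left
      (hfx.intervalIntegrable _ _) (hfx.intervalIntegrable _ _)).symm
  rw [hsplit]
  exact (continuous_parametric_intervalIntegral_of_continuous hf hb).sub
    (continuous_parametric_intervalIntegral_of_continuous hf ha)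

theorem ContinuousOn.exists_forall_dist_lt_of_isCompact_prod
    {α β γ : Type*} [PseudoMetricSpace α] [PseudoMetricSpace β] [PseudoMetricSpace γ]
    {f : α × β → γ} {s : Set α} {C : Set β} (hs : IsCompact s) (hC : IsCompact C)
    (hf : ContinuousOn f (s ×ˢ C)) {ε : ℝ} (hε : 0 < ε) :
    ∃ δ > 0, ∀ x ∈ s, ∀ y ∈ C, ∀ y' ∈ C, dist y y' < δ → dist (f (x, y)) (f (x, y')) < ε := by
  obtain ⟨δ, hδ, hfδ⟩ :=
    Metric.uniformContinuousOn_iff.1 ((hs.prod hC).uniformContinuousOn_of_continuous hf) ε hε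
  refine ⟨δ, hδ, fun x hx y hy y' hy' hyy' => hfδ _ ⟨hx, hy⟩ _ ⟨hx, hy'⟩ ?_⟩
  simpa [Prod.dist_eq] using hyy'

theorem continuousOn_tsum_pow_mul {X : Type*} [TopologicalSpace X] {s : Set X}
    {c : ℕ → X → ℝ} (hc : ∀ n, ContinuousOn (c n) s) {a : ℕ → ℝ}
    (hca : ∀ n, ∀ x ∈ s, |c n x| ≤ a n) (ha : ∀ r, Summable fun n => r ^ (n + 1) * a n) :
    ContinuousOn (fun p : X × ℝ => ∑' n, p.2 ^ (n + 1) * c n p.1) (s ×ˢ univ) := by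
  refine continuousOn_of_locally_continuousOn fun p _ => ?_
  set A := |p.2| + 1
  refine ⟨univ ×ˢ Ioo (-A) A, isOpen_univ.prod isOpen_Ioo,
    ⟨trivial, by linarith [neg_abs_le p.2], by linarith [le_abs_self p.2]⟩, ?_⟩
  refine continuousOn_tsum (fun n => ?_) (ha A) ?_
  · exact (continuous_snd.pow _).continuousOn.mul
      ((hc n).comp continuousOn_fst fun q hq => hq.1.1)
  · rintro n ⟨x, lam⟩ ⟨⟨hx, -⟩, -, hlam⟩
    rw [Real.norm_eq_abs, abs_mul, abs_pow]
    exact mul_le_mul (pow_le_pow_left₀ (abs_nonneg _) (abs_le.2 (Ioo_subset_Icc_self hlam)) _)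
      (hca n x hx) (abs_nonneg _) (by positivity)

def triangle (a b : ℝ) : Set (ℝ × ℝ) := {q | a ≤ q.2 ∧ q.2 ≤ q.1 ∧ q.1 ≤ b}

theorem isCompact_triangle (a b : ℝ) : IsCompact (triangle a b) := by
  refine isCompact_Icc (a := (a, a)) (b := (b, b)) |>.of_isClosed_subset ?_ ?_
  · exact (isClosed_le continuous_const continuous_snd).inter
      ((isClosed_le continuous_snd continuous_fst).inter
        (isClosed_le continuous_fst continuous_const))
  · rintro ⟨t, s⟩ ⟨h₁, h₂, h₃⟩
    exact ⟨⟨h₁.trans h₂, h₁⟩, h₃, h₂.trans h₃⟩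

/-- `iterKernel G n` is the iterated kernel `K_{n+1}` of the kernel `G`. -/
noncomputable def iterKernel (G : ℝ × ℝ → ℝ) : ℕ → ℝ × ℝ → ℝ
  | 0 => G
  | n + 1 => fun q => ∫ z in q.2..q.1, G (q.1, z) * iterKernel G n (z, q.2)

section iterKernel

variable {G : ℝ × ℝ → ℝ}

theorem continuous_iterKernel (hG : Continuous G) (n : ℕ) : Continuous (iterKernel G n) := by
  induction n with
  | zero => exact hG
  | succ n ih =>
    exact intervalIntegral.continuous_parametric_intervalIntegral_of_continuous₂
      (by fun_prop) continuous_snd continuous_fst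

theorem abs_iterKernel_le {a b M : ℝ} (hM : 0 ≤ M) (hGM : ∀ q ∈ triangle a b, |G q| ≤ M)
    (hG : Continuous G) (n : ℕ) :
    ∀ q ∈ triangle a b, |iterKernel G n q| ≤ M ^ (n + 1) * (q.1 - q.2) ^ n / n.factorial := by
  induction n with
  | zero => simpa [iterKernel] using hGM
  | succ n ih =>
    rintro ⟨t, s⟩ ⟨hs, hst, htb⟩
    have hbound : ∀ z ∈ Icc s t,
        |G (t, z) * iterKernel G n (z, s)| ≤ M * (M ^ (n + 1) * (z - s) ^ n / n.factorial) :=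
      fun z hz => by
        rw [abs_mul]
        exact mul_le_mul (hGM _ ⟨hs.trans hz.1, hz.2, htb⟩)
          (ih _ ⟨hs, hz.1, hz.2.trans htb⟩) (abs_nonneg _) hM
    have hpow : ∫ z in s..t, (z - s) ^ n = (t - s) ^ (n + 1) / (n + 1) := by
      simp [intervalIntegral.integral_comp_sub_right (fun u => u ^ n) s, integral_pow]
    calc |iterKernel G (n + 1) (t, s)|
        ≤ ∫ z in s..t, |G (t, z) * iterKernel G n (z, s)| :=
          intervalIntegral.abs_integral_le_integral_abs hst
      _ ≤ ∫ z in s..t, M * (M ^ (n + 1) * (z - s) ^ n / n.factorial) :=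
          intervalIntegral.integral_mono_on hst
            (((hG.comp (by fun_prop)).mul
              ((continuous_iterKernel hG n).comp (by fun_prop))).abs.intervalIntegrable _ _)
            ((by fun_prop : Continuous _).intervalIntegrable _ _) hbound
      _ = M ^ (n + 1 + 1) * (t - s) ^ (n + 1) / (n + 1).factorial := by
        simp only [intervalIntegral.integral_const_mul, intervalIntegral.integral_div, hpow,
          Nat.factorial_succ]
        push_cast
        field_simp
        ring

theorem eq_iterKernel_of_eqOn_triangle {K : ℝ → ℝ → ℝ} {Kn : ℕ → ℝ → ℝ → ℝ} {a b : ℝ}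
    (hGK : ∀ q ∈ triangle a b, G q = K q.1 q.2) (hKn1 : ∀ t s, Kn 1 t s = K t s)
    (hKnrec : ∀ n, 2 ≤ n → ∀ t s, Kn n t s = ∫ z in s..t, K t z * Kn (n - 1) z s) (n : ℕ) :
    ∀ q ∈ triangle a b, Kn (n + 1) q.1 q.2 = iterKernel G n q := by
  induction n with
  | zero => exact fun q hq => (hKn1 _ _).trans (hGK q hq).symm
  | succ n ih =>
    rintro ⟨t, s⟩ ⟨hs, hst, htb⟩
    rw [hKnrec (n + 2) (by omega)]
    refine intervalIntegral.integral_congr fun z hz => ?_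
    rw [uIcc_of_le hst] at hz
    simp only [hGK (t, z) ⟨hs.trans hz.1, hz.2, htb⟩,
      ← ih (z, s) ⟨hs, hz.1, hz.2.trans htb⟩]
    rfl

theorem continuousOn_tsum_pow_mul_iterKernel (hG : Continuous G) (a b : ℝ) :
    ContinuousOn (fun p : (ℝ × ℝ) × ℝ => ∑' n, p.2 ^ (n + 1) * iterKernel G n p.1)
      (triangle a b ×ˢ univ) := by
  obtain ⟨M, hM, hGM⟩ : ∃ M, 0 ≤ M ∧ ∀ q ∈ triangle a b, |G q| ≤ M := by
    obtain ⟨M, hM⟩ := (isCompact_triangle a b).exists_bound_of_continuousOn hG.continuousOn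
    exact ⟨max M 0, le_max_right _ _, fun q hq => (hM q hq).trans (le_max_left _ _)⟩
  refine continuousOn_tsum_pow_mul (fun n => (continuous_iterKernel hG n).continuousOn)
    (a := fun n => M ^ (n + 1) * (b - a) ^ n / n.factorial) (fun n q hq => ?_) fun r => ?_
  · refine (abs_iterKernel_le hM hGM hG n q hq).trans ?_
    obtain ⟨hs, hst, htb⟩ := hq
    gcongr
  · exact (Real.summable_pow_div_factorial (r * M * (b - a))).mul_left (r * M) |>.congr
      fun n => by rw [mul_pow, mul_pow]; ring

end iterKernel

theorem resolvent_jointly_continuous_general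
    (t₀ T : ℝ)
    (K : ℝ → ℝ → ℝ)
    (hK : ContinuousOn (fun q : ℝ × ℝ => K q.1 q.2)
      {q : ℝ × ℝ | t₀ ≤ q.2 ∧ q.2 ≤ q.1 ∧ q.1 ≤ T})
    (Kn : ℕ → ℝ → ℝ → ℝ)
    (hKn1 : ∀ t s, Kn 1 t s = K t s)
    (hKnrec : ∀ n, 2 ≤ n → ∀ t s, Kn n t s = ∫ z in s..t, K t z * Kn (n - 1) z s)
    (R : ℝ → ℝ → ℝ → ℝ)
    (hR : ∀ t s lam, R t s lam = ∑' n : ℕ, lam ^ (n + 1) * Kn (n + 1) t s) :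
    ContinuousOn (fun q : (ℝ × ℝ) × ℝ => R q.1.1 q.1.2 q.2)
      (({q : ℝ × ℝ | t₀ ≤ q.2 ∧ q.2 ≤ q.1 ∧ q.1 ≤ T}) ×ˢ (Set.univ : Set ℝ)) ∧
    ∀ C : Set ℝ, IsCompact C → ∀ lam₀ ∈ C, ∀ ε > (0 : ℝ), ∃ δ > (0 : ℝ),
      ∀ lam ∈ C, |lam - lam₀| < δ →
        ∀ t s, t₀ ≤ s → s ≤ t → t ≤ T → |R t s lam - R t s lam₀| < ε := by
  obtain ⟨G, hG⟩ := ContinuousMap.exists_restrict_eq (isCompact_triangle t₀ T).isClosed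
    ⟨_, hK.domRestrict⟩
  have hGK : ∀ q ∈ triangle t₀ T, G q = K q.1 q.2 := fun q hq => congr($hG ⟨q, hq⟩)
  have hRG : EqOn (fun p : (ℝ × ℝ) × ℝ => R p.1.1 p.1.2 p.2)
      (fun p => ∑' n, p.2 ^ (n + 1) * iterKernel G n p.1) (triangle t₀ T ×ˢ univ) :=
    fun p hp => (hR _ _ _).trans <| tsum_congr fun n => by
      rw [eq_iterKernel_of_eqOn_triangle hGK hKn1 hKnrec n p.1 hp.1]
  have hcont := (continuousOn_tsum_pow_mul_iterKernel G.continuous t₀ T).congr hRG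
  refine ⟨hcont, fun C hC lam₀ hlam₀ ε hε => ?_⟩
  obtain ⟨δ, hδ, hRδ⟩ := hcont.mono (prod_mono_right (subset_univ C))
    |>.exists_forall_dist_lt_of_isCompact_prod (isCompact_triangle t₀ T) hC hε
  refine ⟨δ, hδ, fun lam hlam hd t s hs hst htT => ?_⟩
  simpa [Real.dist_eq] using hRδ (t, s) ⟨hs, hst, htT⟩ lam hlam lam₀ hlam₀ (by rwa [Real.dist_eq])

/-- The resolvent R(t,s,λ) is jointly continuous on Δ × ℝ; in particular λ ↦ R(t,s,λ)
is continuous, uniformly in (t,s) ∈ Δ for λ in compact sets. -/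
theorem resolvent_jointly_continuous
    (t₀ T : ℝ) (ht : t₀ < T)
    (K : ℝ → ℝ → ℝ)
    (hK : ContinuousOn (fun q : ℝ × ℝ => K q.1 q.2)
      {q : ℝ × ℝ | t₀ ≤ q.2 ∧ q.2 ≤ q.1 ∧ q.1 ≤ T})
    (Kn : ℕ → ℝ → ℝ → ℝ)
    (hKn1 : ∀ t s, Kn 1 t s = K t s)
    (hKnrec : ∀ n, 2 ≤ n → ∀ t s, Kn n t s = ∫ z in s..t, K t z * Kn (n - 1) z s)
    (R : ℝ → ℝ → ℝ → ℝ)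
    (hR : ∀ t s lam, R t s lam = ∑' n : ℕ, lam ^ (n + 1) * Kn (n + 1) t s) :
    ContinuousOn (fun q : (ℝ × ℝ) × ℝ => R q.1.1 q.1.2 q.2)
      (({q : ℝ × ℝ | t₀ ≤ q.2 ∧ q.2 ≤ q.1 ∧ q.1 ≤ T}) ×ˢ (Set.univ : Set ℝ)) ∧
    ∀ C : Set ℝ, IsCompact C → ∀ lam₀ ∈ C, ∀ ε > (0 : ℝ), ∃ δ > (0 : ℝ),
      ∀ lam ∈ C, |lam - lam₀| < δ →
        ∀ t s, t₀ ≤ s → s ≤ t → t ≤ T → |R t s lam - R t s lam₀| < ε :=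
  resolvent_jointly_continuous_general t₀ T K hK Kn hKn1 hKnrec R hR
end
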